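/- Let T ∈ GL(V) be an invertible linear map on a finite-dimensional complex vector space V, let S ∈ GL(V) with S^p = T (a p-th root of T), and let P_p be the cyclic permutation matrix on ℂ^p. Then dim ker(S ⊗ P_p - id) = dim ker(T - id), where S ⊗ P_p acts on V ⊗ ℂ^p. -/

import Mathlib

/-!
Identifying `V ⊗ ℂ^(p+1)` with `(p+1)`-tuples of vectors of `V`, the map `S ⊗ P` becomes the
twisted shift `(x_j)_j ↦ (S x_(j+1))_j`, indices taken mod `p+1`. A fixed tuple satisfies
`x_j = S^(p+1-j) x_0`, so it is determined by `x_0`, which is then fixed by `S^(p+1) = T`;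
conversely every `T`-fixed vector `v` yields the fixed tuple `(S^(p+1-j) v)_j`.
-/

open Kronecker Matrix LinearMap

namespace Module.End

variable {R M : Type*} [Ring R] [AddCommGroup M] [Module R M]

lemma mem_ker_sub_one {f : Module.End R M} {x : M} : x ∈ ker (f - 1) ↔ f x = x := by
  rw [mem_ker, LinearMap.sub_apply, one_apply, sub_eq_zero]

def twistedShift (f : Module.End R M) (k : ℕ) : Module.End R (Fin (k + 1) → M) :=
  LinearMap.pi fun j => f ∘ₗ LinearMap.proj (j + 1)

variable {f : Module.End R M} {k : ℕ}

@[simp]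
lemma twistedShift_apply (x : Fin (k + 1) → M) (j : Fin (k + 1)) :
    twistedShift f k x j = f (x (j + 1)) := rfl

lemma mem_ker_twistedShift_sub_one {x : Fin (k + 1) → M} :
    x ∈ ker (twistedShift f k - 1) ↔ ∀ j, f (x (j + 1)) = x j := by
  rw [mem_ker_sub_one, funext_iff]
  rfl

lemma pow_apply_zero_of_twistedShift {x : Fin (k + 1) → M}
    (hx : ∀ j, f (x (j + 1)) = x j) (j : Fin (k + 1)) : (f ^ (k - j + 1)) (x 0) = x j := by
  induction j using Fin.reverseInduction with
  | last => simpa using hx (Fin.last k)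
  | cast i ih =>
    rw [← hx i.castSucc, Fin.coeSucc_eq_succ, ← ih, ← mul_apply, ← pow_succ']
    congr 2
    simp only [Fin.val_castSucc, Fin.val_succ]
    omega

def kerTwistedShiftSubOneEquiv (f : Module.End R M) (k : ℕ) :
    ker (twistedShift f k - 1) ≃ₗ[R] ker (f ^ (k + 1) - 1) where
  toFun x := ⟨x.1 0, mem_ker_sub_one.2 <|
    pow_apply_zero_of_twistedShift (mem_ker_twistedShift_sub_one.1 x.2) 0⟩
  map_add' _ _ := rfl
  map_smul' _ _ := rfl
  invFun v := ⟨fun j => (f ^ (k - j + 1)) v, by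
    rw [mem_ker_twistedShift_sub_one]
    intro j
    induction j using Fin.lastCases with
    | last => simp [mem_ker_sub_one.1 v.2]
    | cast i =>
      rw [Fin.coeSucc_eq_succ, ← mul_apply, ← pow_succ']
      congr 2
      simp only [Fin.val_castSucc, Fin.val_succ]
      omega⟩
  left_inv x := Subtype.ext <| funext <|
    pow_apply_zero_of_twistedShift (mem_ker_twistedShift_sub_one.1 x.2)
  right_inv v := Subtype.ext <| by simpa using mem_ker_sub_one.1 v.2

end Module.End

lemma LinearMap.finrank_ker_eq_of_comp_eq {R M N : Type*} [Ring R] [AddCommGroup M] [Module R M]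
    [AddCommGroup N] [Module R N] (e : M ≃ₗ[R] N) {A : Module.End R M} {B : Module.End R N}
    (h : e.toLinearMap ∘ₗ A = B ∘ₗ e) : Module.finrank R (ker A) = Module.finrank R (ker B) := by
  rw [← LinearEquiv.ker_comp e A, h, ker_comp, Submodule.comap_equiv_eq_map_symm,
    LinearEquiv.finrank_map_eq]

namespace Matrix

def cyclicShift (R : Type*) [Zero R] [One R] (k : ℕ) : Matrix (Fin (k + 1)) (Fin (k + 1)) R :=
  of fun i j => if j = i + 1 then 1 else 0

variable {R m : Type*} [Fintype m]

lemma kronecker_cyclicShift_mulVec [Semiring R] (S : Matrix m m R) {k : ℕ}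
    (x : m × Fin (k + 1) → R) (i : m) (j : Fin (k + 1)) :
    (S ⊗ₖ cyclicShift R k *ᵥ x) (i, j) = (S *ᵥ fun l => x (l, j + 1)) i := by
  simp [cyclicShift, mulVec, dotProduct, Fintype.sum_prod_type]

variable [CommRing R] [DecidableEq m]

lemma finrank_ker_toLin'_kronecker_cyclicShift_sub_one (S : Matrix m m R) (k : ℕ) :
    Module.finrank R (ker (toLin' (S ⊗ₖ cyclicShift R k - 1))) =
      Module.finrank R (ker (toLin' (S ^ (k + 1) - 1))) := by
  let e : (m × Fin (k + 1) → R) ≃ₗ[R] (Fin (k + 1) → m → R) :=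
    (LinearEquiv.funCongrLeft R R (Equiv.prodComm _ _)).trans (LinearEquiv.curry R R _ _)
  have h : e.toLinearMap ∘ₗ toLin' (S ⊗ₖ cyclicShift R k - 1) =
      (Module.End.twistedShift (toLin' S) k - 1) ∘ₗ e := by
    refine LinearMap.ext fun x => funext fun j => funext fun i => ?_
    show ((S ⊗ₖ cyclicShift R k - 1) *ᵥ x) (i, j) = (S *ᵥ fun l => x (l, j + 1)) i - x (i, j)
    rw [sub_mulVec, one_mulVec, Pi.sub_apply, kronecker_cyclicShift_mulVec]
  rw [finrank_ker_eq_of_comp_eq e h, (Module.End.kerTwistedShiftSubOneEquiv _ k).finrank_eq,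
    map_sub, toLin'_pow, toLin'_one, ← Module.End.one_eq_id]

end Matrix

theorem stmt6_general (n p : ℕ) (T S : Matrix (Fin n) (Fin n) ℂ)
    (hroot : S ^ (p + 1) = T)
    (P : Matrix (Fin (p + 1)) (Fin (p + 1)) ℂ)
    (hP : P = Matrix.of fun i j => if j = i + 1 then (1 : ℂ) else 0) :
    Module.finrank ℂ (LinearMap.ker (Matrix.toLin' (S ⊗ₖ P - 1))) =
      Module.finrank ℂ (LinearMap.ker (Matrix.toLin' (T - 1))) := by
  subst hroot hP
  exact finrank_ker_toLin'_kronecker_cyclicShift_sub_one S p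

/-- Let `T` be an invertible matrix on `ℂⁿ`, `S` a `(p+1)`-st root of `T` (also invertible),
and `P` the cyclic permutation matrix on `ℂ^(p+1)`.  Then the kernel of `S ⊗ P - id`
(Kronecker product) has the same dimension as the kernel of `T - id`. -/
theorem stmt6 (n p : ℕ) (T S : Matrix (Fin n) (Fin n) ℂ)
    (hT : IsUnit T) (hS : IsUnit S) (hroot : S ^ (p + 1) = T)
    (P : Matrix (Fin (p + 1)) (Fin (p + 1)) ℂ)
    (hP : P = Matrix.of fun i j => if j = i + 1 then (1 : ℂ) else 0) :
    Module.finrank ℂ (LinearMap.ker (Matrix.toLin' (S ⊗ₖ P - 1))) =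
      Module.finrank ℂ (LinearMap.ker (Matrix.toLin' (T - 1))) :=
  stmt6_general n p T S hroot P hP
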